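/- arXiv:1206.1740 — 4 statements merged into one kernel-verified Lean document; each statement's English description precedes it below -/
import Mathlib

section
/- Let P(x, y | b, b') be a conditional probability distribution with binary inputs b, b' ∈ {0,1} and binary outputs x, y ∈ {accept, reject} (i.e., for every input pair (b, b'), the values P(x, y | b, b') are nonnegative and sum to 1 over the four output pairs). Assume P satisfies two-way no-signalling: for every x and b, the marginal ∑_y P(x, y | b, b') does not depend on b', and for every y and b', the marginal ∑_x P(x, y | b, b') does not depend on b. Define p₀ := P(accept, accept | b = 0, b' = 0), p₁ := P(accept, accept | b = 1, b' = 1), and α := P(accept, accept | b = 0, b' = 1). Then p₀ + p₁ ≤ 1 + α. -/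
/-- **No-signalling lemma (Lemma 1).**
`P x y b b'` is the conditional probability of outputs `x, y` (Boolean, with
`true` = accept) given binary inputs `b, b'`.  If `P` is a conditional
probability distribution (nonnegative, normalized for every input pair) that
satisfies two-way no-signalling, then, writing
`p₀ = P(acc, acc | 0, 0)`, `p₁ = P(acc, acc | 1, 1)` and
`α = P(acc, acc | 0, 1)`, we have `p₀ + p₁ ≤ 1 + α`. -/
theorem no_signalling_sum_bound
    (P : Bool → Bool → Bool → Bool → ℝ)
    (hnn : ∀ x y b b', 0 ≤ P x y b b')
    (hnorm : ∀ b b', ∑ x : Bool, ∑ y : Bool, P x y b b' = 1)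
    (hnsR : ∀ x b b₁' b₂', ∑ y : Bool, P x y b b₁' = ∑ y : Bool, P x y b b₂')
    (hnsL : ∀ y b₁ b₂ b', ∑ x : Bool, P x y b₁ b' = ∑ x : Bool, P x y b₂ b') :
    P true true false false + P true true true true ≤ 1 + P true true false true := by
  have h1 := hnsR true false false true
  have h2 := hnsL true true false true
  have h3 := hnorm false true
  simp [Fintype.sum_bool] at h1 h2 h3
  have a1 := hnn true false false false
  have a2 := hnn false true true true
  have a3 := hnn false false false true
  linarith
end

section
/- Let R and S be finite sets, let p_R⁰ and p_R¹ be probability distributions on R, let p_S be a probability distribution on S, and let P(x, y | r, s) be a conditional probability distribution with outputs x, y ∈ {0,1} (for each (r, s), the values are nonnegative and sum to 1 over (x, y)). Assume no-signalling from r to y: for every y and s, the marginal P(y | r, s) := ∑_x P(x, y | r, s) does not depend on r. For b ∈ {0,1} define p_b := ∑_{r ∈ R} ∑_{s ∈ S} p_R^b(r) · p_S(s) · P(x = b, y = b | r, s). Then p₀ + p₁ ≤ 1. -/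
open Finset in
/-- **Weak bindingness of the trivial protocol in the local command model.**
Bob picks a strategy `r ∈ R` with distribution `pR b` (which may depend on the
commanded bit `b`), Brian picks `s ∈ S` with a fixed distribution `pS`, and
`P x y r s` is the conditional probability that Bob outputs `x` and Brian
outputs `y` given strategies `(r, s)`.  Assuming no-signalling from `r` to
Brian's output `y`, the probabilities
`p_b = ∑_{r,s} pR b r · pS s · P b b r s` of successfully unveiling `b`
satisfy `p₀ + p₁ ≤ 1`. -/
theorem local_command_weakly_binding
    {R S : Type*} [Fintype R] [Fintype S]
    (pR : Bool → R → ℝ) (pS : S → ℝ)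
    (hpRnn : ∀ b r, 0 ≤ pR b r) (hpRsum : ∀ b, ∑ r : R, pR b r = 1)
    (hpSnn : ∀ s, 0 ≤ pS s) (hpSsum : ∑ s : S, pS s = 1)
    (P : Bool → Bool → R → S → ℝ)
    (hPnn : ∀ x y r s, 0 ≤ P x y r s)
    (hPnorm : ∀ r s, ∑ x : Bool, ∑ y : Bool, P x y r s = 1)
    (hns : ∀ y r₁ r₂ s, ∑ x : Bool, P x y r₁ s = ∑ x : Bool, P x y r₂ s) :
    (∑ r : R, ∑ s : S, pR false r * pS s * P false false r s) +
    (∑ r : R, ∑ s : S, pR true r * pS s * P true true r s) ≤ 1 := by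
  by_cases hR : Nonempty R
  · obtain ⟨r₀⟩ := hR
    have key : ∀ b, (∑ r : R, ∑ s : S, pR b r * pS s * P b b r s)
        ≤ ∑ s : S, pS s * (∑ x : Bool, P x b r₀ s) := by
      intro b
      calc ∑ r : R, ∑ s : S, pR b r * pS s * P b b r s
          ≤ ∑ r : R, ∑ s : S, pR b r * pS s * (∑ x : Bool, P x b r s) := by
            refine Finset.sum_le_sum fun r _ => Finset.sum_le_sum fun s _ => ?_
            refine mul_le_mul_of_nonneg_left ?_ (mul_nonneg (hpRnn b r) (hpSnn s))
            exact Finset.single_le_sum (f := fun x => P x b r s)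
              (fun x _ => hPnn x b r s) (Finset.mem_univ b)
        _ = ∑ r : R, pR b r * ∑ s : S, pS s * (∑ x : Bool, P x b r₀ s) := by
            refine Finset.sum_congr rfl fun r _ => ?_
            rw [Finset.mul_sum]
            refine Finset.sum_congr rfl fun s _ => ?_
            rw [hns b r r₀ s]; ring
        _ = ∑ s : S, pS s * (∑ x : Bool, P x b r₀ s) := by
            rw [← Finset.sum_mul, hpRsum, one_mul]
    have h0 := key false
    have h1 := key true
    have hsum : (∑ s : S, pS s * (∑ x : Bool, P x false r₀ s)) +
        (∑ s : S, pS s * (∑ x : Bool, P x true r₀ s)) = 1 := by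
      rw [← Finset.sum_add_distrib]
      calc ∑ s : S, (pS s * (∑ x : Bool, P x false r₀ s) +
              pS s * (∑ x : Bool, P x true r₀ s))
          = ∑ s : S, pS s := by
            refine Finset.sum_congr rfl fun s _ => ?_
            have := hPnorm r₀ s
            simp only [Fintype.sum_bool] at this ⊢
            linear_combination pS s * this
        _ = 1 := hpSsum
    linarith
  · have : IsEmpty R := not_nonempty_iff.mp hR
    simp
end

section
/- Fix n ≥ 1, δ > 0, and two strings s, t ∈ {0,1}^{2n}. Let Z be a uniformly random subset of {1, …, 2n} of size n, and let X := {1, …, 2n} \ Z be its complement. For a string u ∈ {0,1}^{2n} and an index set I, let u_I denote the restriction of u to the positions in I, and let d_H denote Hamming distance (the number of positions at which two strings of equal length differ). Then Pr[ d_H(s_X, t_X) ≥ δn and d_H(s_Z, t_Z) = 0 ] ≤ exp(−nδ²/2). -/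
open Finset

lemma aux_choose_step (n m : ℕ) (h1 : n ≤ m) (h2 : m + 1 ≤ 2 * n) :
    2 * Nat.choose m n ≤ Nat.choose (m + 1) n := by
  obtain ⟨k, rfl⟩ : ∃ k, n = k + 1 := ⟨n - 1, by omega⟩
  have hrec : Nat.choose (m + 1) (k + 1) = Nat.choose m k + Nat.choose m (k + 1) :=
    Nat.choose_succ_succ m k
  have hkey : Nat.choose m (k + 1) ≤ Nat.choose m k := by
    have h3 : Nat.choose m (k + 1) * (k + 1) = Nat.choose m k * (m - k) :=
      Nat.choose_succ_right_eq m k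
    have h4 : Nat.choose m k * (m - k) ≤ Nat.choose m k * (k + 1) :=
      Nat.mul_le_mul_left _ (by omega)
    have h5 : Nat.choose m (k + 1) * (k + 1) ≤ Nat.choose m k * (k + 1) := by
      rw [h3]; exact h4
    exact Nat.le_of_mul_le_mul_right h5 (by omega)
  omega

lemma aux_choose_pow (n : ℕ) : ∀ d ≤ n, 2 ^ d * Nat.choose (2 * n - d) n ≤ Nat.choose (2 * n) n := by
  intro d
  induction d with
  | zero => simp
  | succ d ih =>
    intro hd
    have step : 2 * Nat.choose (2 * n - (d + 1)) n ≤ Nat.choose (2 * n - d) n := by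
      have h : 2 * n - (d + 1) + 1 = 2 * n - d := by omega
      calc 2 * Nat.choose (2 * n - (d + 1)) n
          ≤ Nat.choose (2 * n - (d + 1) + 1) n :=
            aux_choose_step n _ (by omega) (by omega)
        _ = Nat.choose (2 * n - d) n := by rw [h]
    calc 2 ^ (d + 1) * Nat.choose (2 * n - (d + 1)) n
        = 2 ^ d * (2 * Nat.choose (2 * n - (d + 1)) n) := by ring
      _ ≤ 2 ^ d * Nat.choose (2 * n - d) n := Nat.mul_le_mul_left _ step
      _ ≤ Nat.choose (2 * n) n := ih (by omega)


open Finset in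
open Classical in
/-- **Sampling bound from Hoeffding's inequality.**
Fix strings `s, t : Fin (2n) → Bool` and a uniformly random subset `Z` of
`{1, …, 2n}` of size `n` (formalized by counting: the probability of an event
is the number of size-`n` subsets realizing it divided by the total number of
size-`n` subsets).  With `X = Zᶜ` the complement, the probability that the
Hamming distance between `s` and `t` restricted to `X` is at least `δn` while
their restrictions to `Z` agree exactly is at most `exp(−nδ²/2)`. -/
theorem sampling_hamming_bound
    (n : ℕ) (hn : 1 ≤ n) (δ : ℝ) (hδ : 0 < δ) (s t : Fin (2 * n) → Bool) :
    ((((Finset.univ : Finset (Fin (2 * n))).powersetCard n).filter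
        (fun Z : Finset (Fin (2 * n)) =>
          δ * n ≤ ((Zᶜ.filter (fun i => s i ≠ t i)).card : ℝ) ∧
          (Z.filter (fun i => s i ≠ t i)).card = 0)).card : ℝ) /
      (((Finset.univ : Finset (Fin (2 * n))).powersetCard n).card : ℝ)
      ≤ Real.exp (-(n : ℝ) * δ ^ 2 / 2) := by
  set D : Finset (Fin (2 * n)) := univ.filter (fun i => s i ≠ t i) with hD
  set d : ℕ := D.card with hdd
  set S : Finset (Finset (Fin (2 * n))) :=
    (((Finset.univ : Finset (Fin (2 * n))).powersetCard n).filter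
        (fun Z : Finset (Fin (2 * n)) =>
          δ * n ≤ ((Zᶜ.filter (fun i => s i ≠ t i)).card : ℝ) ∧
          (Z.filter (fun i => s i ≠ t i)).card = 0)) with hS
  have hcardfin : Fintype.card (Fin (2 * n)) = 2 * n := Fintype.card_fin _
  have hNnat : ((Finset.univ : Finset (Fin (2 * n))).powersetCard n).card
      = Nat.choose (2 * n) n := by
    rw [card_powersetCard, card_univ, hcardfin]
  have hNpos : (0 : ℝ) < (((Finset.univ : Finset (Fin (2 * n))).powersetCard n).card : ℝ) := by
    rw [hNnat]
    exact_mod_cast Nat.choose_pos (by omega)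
  rcases S.eq_empty_or_nonempty with hSe | ⟨Z, hZ⟩
  · rw [hSe]
    simp only [card_empty, Nat.cast_zero, zero_div]
    positivity
  · -- extract facts from the witness Z
    rw [hS, mem_filter] at hZ
    obtain ⟨hZp, hZ1, hZ2⟩ := hZ
    have hZcard : Z.card = n := by
      rw [mem_powersetCard_univ] at hZp; exact hZp
    have hZccard : Zᶜ.card = n := by
      rw [card_compl, hcardfin, hZcard]; omega
    -- every member of S is a subset of Dᶜ
    have hsub : ∀ W ∈ S, W ⊆ Dᶜ ∧ W.card = n := by
      intro W hW
      rw [hS, mem_filter] at hW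
      obtain ⟨hWp, _, hW2⟩ := hW
      constructor
      · intro i hi
        rw [card_eq_zero] at hW2
        have : i ∉ W.filter (fun i => s i ≠ t i) := by rw [hW2]; exact notMem_empty i
        simp only [mem_filter, hi, true_and, not_not] at this
        simp only [mem_compl, hD, mem_filter, mem_univ, true_and]
        exact fun h => h this
      · rw [mem_powersetCard_univ] at hWp; exact hWp
    -- δ ≤ 1 and δ * n ≤ d
    have hsubD : Zᶜ.filter (fun i => s i ≠ t i) ⊆ D := by
      intro i hi
      rw [mem_filter] at hi
      simp [hD, hi.2]
    have hdlb : δ * n ≤ (d : ℝ) := by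
      calc δ * n ≤ ((Zᶜ.filter (fun i => s i ≠ t i)).card : ℝ) := hZ1
        _ ≤ (d : ℝ) := by exact_mod_cast card_le_card hsubD
    have hδ1 : δ ≤ 1 := by
      have h1 : ((Zᶜ.filter (fun i => s i ≠ t i)).card : ℝ) ≤ (n : ℝ) := by
        have := card_le_card (filter_subset (fun i => s i ≠ t i) Zᶜ)
        rw [hZccard] at this
        exact_mod_cast this
      have h2 : δ * n ≤ (n : ℝ) := le_trans hZ1 h1
      have hn' : (0 : ℝ) < n := by exact_mod_cast hn
      nlinarith
    -- d ≤ n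
    have hDccard : Dᶜ.card = 2 * n - d := by rw [card_compl, hcardfin, hdd]
    have hdn : d ≤ n := by
      have h1 : Z.card ≤ Dᶜ.card := card_le_card (hsub Z (by rw [hS, mem_filter]; exact ⟨hZp, hZ1, hZ2⟩)).1
      have hDle : D.card ≤ 2 * n := by
        have := card_le_card (subset_univ D); rwa [card_univ, hcardfin] at this
      rw [hZcard, hDccard] at h1
      omega
    -- card bound: S ⊆ powersetCard n Dᶜ
    have hScard : S.card ≤ Nat.choose (2 * n - d) n := by
      have h1 : S ⊆ Dᶜ.powersetCard n := by
        intro W hW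
        obtain ⟨h1, h2⟩ := hsub W hW
        rw [mem_powersetCard]
        exact ⟨h1, h2⟩
      calc S.card ≤ (Dᶜ.powersetCard n).card := card_le_card h1
        _ = Nat.choose (2 * n - d) n := by rw [card_powersetCard, hDccard]
    -- key numeric bound
    have hkeynat : 2 ^ d * S.card ≤ Nat.choose (2 * n) n :=
      le_trans (Nat.mul_le_mul_left _ hScard) (aux_choose_pow n d hdn)
    rw [div_le_iff₀ hNpos, hNnat]
    have h2dpos : (0 : ℝ) < 2 ^ d := by positivity
    have hkey : (S.card : ℝ) * 2 ^ d ≤ (Nat.choose (2 * n) n : ℝ) := by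
      rw [mul_comm]; exact_mod_cast hkeynat
    calc (S.card : ℝ) ≤ (Nat.choose (2 * n) n : ℝ) / 2 ^ d := by
          rw [le_div_iff₀ h2dpos]; exact hkey
      _ = ((2 : ℝ) ^ d)⁻¹ * (Nat.choose (2 * n) n : ℝ) := by ring
      _ ≤ Real.exp (-(n : ℝ) * δ ^ 2 / 2) * (Nat.choose (2 * n) n : ℝ) := by
          apply mul_le_mul_of_nonneg_right _ (by positivity)
          have hpow : ((2 : ℝ) ^ d)⁻¹ = Real.exp (-(d * Real.log 2)) := by
            rw [Real.exp_neg, Real.exp_nat_mul, Real.exp_log (by norm_num : (0:ℝ) < 2)]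
          rw [hpow]
          apply Real.exp_le_exp.mpr
          have hlog : (0.6931471803 : ℝ) < Real.log 2 := Real.log_two_gt_d9
          have hn' : (0 : ℝ) ≤ (n : ℝ) := by positivity
          nlinarith [hdlb, hδ1, hδ.le, mul_nonneg hn' (sq_nonneg δ)]
end

section
/- Let X, Y be finite sets and let Γ = {0,1}. Let P be a joint probability distribution of random variables (X, Y, Γ) taking values in X × Y × {0,1}. Define the classical conditional max-entropy by H_max(X | Y = y) := 2·log₂( ∑_{x ∈ X} √(P(X = x | Y = y)) ) and H_max(X | Y) := log₂( ∑_{y ∈ Y} P(Y = y) · 2^{H_max(X | Y = y)} ), and analogously define H_max(X | Y, Γ) by conditioning on pairs (y, γ) with P(Y = y, Γ = γ) > 0. Then H_max(X | Y) ≤ H_max(X | Y, Γ) + 1, i.e., conditioning on one additional bit of classical side information decreases the max-entropy by at most 1. -/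
open Finset in
/-- The classical conditional max-entropy `H_max(X | Y)` of a joint
distribution `P` on `X × Y`: with `P(y) = ∑_x P(x, y)`, `P(x|y) = P(x,y)/P(y)`
and `H_max(X | Y = y) = 2 log₂ (∑_x √(P(x|y)))`, it is
`H_max(X | Y) = log₂ (∑_y P(y) · 2^{H_max(X | Y = y)})`.
(Values `y` with `P(y) = 0` contribute `0` to the sum, since the factor
`P(y)` vanishes, matching the convention of conditioning only on `y` with
`P(y) > 0`.) -/
noncomputable def condMaxEnt {X Y : Type*} [Fintype X] [Fintype Y]
    (P : X → Y → ℝ) : ℝ :=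
  Real.logb 2 (∑ y : Y, (∑ x : X, P x y) *
    (2 : ℝ) ^ (2 * Real.logb 2 (∑ x : X, Real.sqrt (P x y / ∑ x' : X, P x' y))))

lemma sqrt_add_le_aux {a b : ℝ} (ha : 0 ≤ a) (hb : 0 ≤ b) :
    Real.sqrt (a + b) ≤ Real.sqrt a + Real.sqrt b := by
  have h1 : a + b ≤ (Real.sqrt a + Real.sqrt b) ^ 2 := by
    have := Real.sq_sqrt ha
    have := Real.sq_sqrt hb
    have := Real.sqrt_nonneg a
    have := Real.sqrt_nonneg b
    nlinarith
  calc Real.sqrt (a + b) ≤ Real.sqrt ((Real.sqrt a + Real.sqrt b) ^ 2) :=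
        Real.sqrt_le_sqrt h1
    _ = Real.sqrt a + Real.sqrt b := Real.sqrt_sq (by positivity)

/-- Each term of the sum inside `condMaxEnt` simplifies to `(∑_x √Q(x,y))²`. -/
lemma condMaxEnt_term_eq {X : Type*} [Fintype X] (Q : X → ℝ)
    (hQ : ∀ x, 0 ≤ Q x) :
    (∑ x : X, Q x) *
      (2 : ℝ) ^ (2 * Real.logb 2 (∑ x : X, Real.sqrt (Q x / ∑ x' : X, Q x'))) =
    (∑ x : X, Real.sqrt (Q x)) ^ 2 := by
  set s : ℝ := ∑ x : X, Q x with hs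
  rcases eq_or_lt_of_le (Finset.sum_nonneg fun x _ => hQ x) with h0 | hpos
  · have hz : ∀ x : X, Q x = 0 := by
      intro x
      have := (Finset.sum_eq_zero_iff_of_nonneg (fun x _ => hQ x)).mp h0.symm
      exact this x (Finset.mem_univ x)
    simp [hs, hz]
  · -- s > 0
    have hsne : s ≠ 0 := ne_of_gt hpos
    have hsqrt : Real.sqrt s > 0 := Real.sqrt_pos.mpr hpos
    have hdiv : (∑ x : X, Real.sqrt (Q x / s)) =
        (∑ x : X, Real.sqrt (Q x)) / Real.sqrt s := by
      rw [Finset.sum_div]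
      refine Finset.sum_congr rfl fun x _ => ?_
      exact Real.sqrt_div (hQ x) s
    -- the numerator is positive
    have ht : 0 < ∑ x : X, Real.sqrt (Q x) := by
      by_contra h
      push_neg at h
      have hle : (∑ x : X, Real.sqrt (Q x)) = 0 :=
        le_antisymm h (Finset.sum_nonneg fun x _ => Real.sqrt_nonneg _)
      have hz : ∀ x : X, Real.sqrt (Q x) = 0 := by
        intro x
        exact (Finset.sum_eq_zero_iff_of_nonneg
          (fun x _ => Real.sqrt_nonneg _)).mp hle x (Finset.mem_univ x)
      have : s = 0 := by
        rw [hs]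
        refine Finset.sum_eq_zero fun x _ => ?_
        have := hz x
        rwa [Real.sqrt_eq_zero (hQ x)] at this
      exact hsne this
    have hrpos : 0 < ∑ x : X, Real.sqrt (Q x / s) := by rw [hdiv]; positivity
    have hpow : (2 : ℝ) ^ (2 * Real.logb 2 (∑ x : X, Real.sqrt (Q x / s))) =
        (∑ x : X, Real.sqrt (Q x / s)) ^ 2 := by
      rw [mul_comm, Real.rpow_mul (by norm_num : (0:ℝ) ≤ 2),
        Real.rpow_logb (by norm_num) (by norm_num) hrpos]
      norm_num [Real.rpow_natCast (∑ x : X, Real.sqrt (Q x / s)) 2]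
    rw [hpow, hdiv, div_pow, Real.sq_sqrt hpos.le, mul_comm,
      div_mul_cancel₀ _ hsne]

/-- **One bit of side information decreases the max-entropy by at most one.**
For any joint probability distribution `P` of `(X, Y, Γ)` with `Γ` binary,
`H_max(X | Y) ≤ H_max(X | Y, Γ) + 1`. -/
theorem condMaxEnt_cond_bit_le
    {X Y : Type*} [Fintype X] [Fintype Y]
    (P : X → Y → Bool → ℝ)
    (hnn : ∀ x y γ, 0 ≤ P x y γ)
    (hsum : ∑ x : X, ∑ y : Y, ∑ γ : Bool, P x y γ = 1) :
    condMaxEnt (fun x y => ∑ γ : Bool, P x y γ)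
      ≤ condMaxEnt (fun x (p : Y × Bool) => P x p.1 p.2) + 1 := by
  unfold condMaxEnt
  -- simplify both sums via condMaxEnt_term_eq
  have hL : (∑ y : Y, (∑ x : X, ∑ γ : Bool, P x y γ) *
      (2 : ℝ) ^ (2 * Real.logb 2 (∑ x : X,
        Real.sqrt ((∑ γ : Bool, P x y γ) / ∑ x' : X, ∑ γ : Bool, P x' y γ)))) =
      ∑ y : Y, (∑ x : X, Real.sqrt (∑ γ : Bool, P x y γ)) ^ 2 := by
    refine Finset.sum_congr rfl fun y _ => ?_
    exact condMaxEnt_term_eq (fun x => ∑ γ : Bool, P x y γ)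
      (fun x => Finset.sum_nonneg fun γ _ => hnn x y γ)
  have hR : (∑ p : Y × Bool, (∑ x : X, P x p.1 p.2) *
      (2 : ℝ) ^ (2 * Real.logb 2 (∑ x : X,
        Real.sqrt (P x p.1 p.2 / ∑ x' : X, P x' p.1 p.2)))) =
      ∑ p : Y × Bool, (∑ x : X, Real.sqrt (P x p.1 p.2)) ^ 2 := by
    refine Finset.sum_congr rfl fun p _ => ?_
    exact condMaxEnt_term_eq (fun x => P x p.1 p.2) (fun x => hnn x p.1 p.2)
  rw [hL, hR]
  set S : ℝ := ∑ y : Y, (∑ x : X, Real.sqrt (∑ γ : Bool, P x y γ)) ^ 2 with hS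
  set T : ℝ := ∑ p : Y × Bool, (∑ x : X, Real.sqrt (P x p.1 p.2)) ^ 2 with hT
  -- T ≥ 1
  have hT1 : 1 ≤ T := by
    calc (1:ℝ) = ∑ p : Y × Bool, ∑ x : X, P x p.1 p.2 := by
          rw [← hsum, Fintype.sum_prod_type]
          rw [Finset.sum_comm]
          exact Finset.sum_congr rfl fun y _ => Finset.sum_comm
      _ ≤ T := by
          refine Finset.sum_le_sum fun p _ => ?_
          calc (∑ x : X, P x p.1 p.2) = ∑ x : X, Real.sqrt (P x p.1 p.2) ^ 2 := by
                refine Finset.sum_congr rfl fun x _ => (Real.sq_sqrt (hnn x p.1 p.2)).symm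
            _ ≤ (∑ x : X, Real.sqrt (P x p.1 p.2)) ^ 2 :=
                Finset.sum_sq_le_sq_sum_of_nonneg fun x _ => Real.sqrt_nonneg _
  -- S ≥ 1 similarly (gives S > 0)
  have hS1 : 1 ≤ S := by
    calc (1:ℝ) = ∑ y : Y, ∑ x : X, ∑ γ : Bool, P x y γ := by
          rw [← hsum]; exact Finset.sum_comm
      _ ≤ S := by
          refine Finset.sum_le_sum fun y _ => ?_
          calc (∑ x : X, ∑ γ : Bool, P x y γ)
              = ∑ x : X, Real.sqrt (∑ γ : Bool, P x y γ) ^ 2 := by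
                refine Finset.sum_congr rfl fun x _ =>
                  (Real.sq_sqrt (Finset.sum_nonneg fun γ _ => hnn x y γ)).symm
            _ ≤ (∑ x : X, Real.sqrt (∑ γ : Bool, P x y γ)) ^ 2 :=
                Finset.sum_sq_le_sq_sum_of_nonneg fun x _ => Real.sqrt_nonneg _
  -- Key inequality: S ≤ 2 * T
  have hST : S ≤ 2 * T := by
    rw [hS, hT, Fintype.sum_prod_type, Finset.mul_sum]
    refine Finset.sum_le_sum fun y _ => ?_
    set u : ℝ := ∑ x : X, Real.sqrt (P x y false)
    set v : ℝ := ∑ x : X, Real.sqrt (P x y true)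
    have hu : 0 ≤ u := Finset.sum_nonneg fun x _ => Real.sqrt_nonneg _
    have hv : 0 ≤ v := Finset.sum_nonneg fun x _ => Real.sqrt_nonneg _
    have h1 : (∑ x : X, Real.sqrt (∑ γ : Bool, P x y γ)) ≤ u + v := by
      rw [← Finset.sum_add_distrib]
      refine Finset.sum_le_sum fun x _ => ?_
      rw [Fintype.sum_bool]
      calc Real.sqrt (P x y true + P x y false)
          ≤ Real.sqrt (P x y true) + Real.sqrt (P x y false) :=
            sqrt_add_le_aux (hnn x y true) (hnn x y false)
        _ = Real.sqrt (P x y false) + Real.sqrt (P x y true) := by ring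
    have h2 : (∑ x : X, Real.sqrt (∑ γ : Bool, P x y γ)) ^ 2 ≤ (u + v) ^ 2 := by
      have hnn' : 0 ≤ ∑ x : X, Real.sqrt (∑ γ : Bool, P x y γ) :=
        Finset.sum_nonneg fun x _ => Real.sqrt_nonneg _
      exact pow_le_pow_left₀ hnn' h1 2
    have h3 : (u + v) ^ 2 ≤ 2 * (u ^ 2 + v ^ 2) := by nlinarith [sq_nonneg (u - v)]
    calc (∑ x : X, Real.sqrt (∑ γ : Bool, P x y γ)) ^ 2 ≤ 2 * (u ^ 2 + v ^ 2) :=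
          h2.trans h3
      _ = 2 * ∑ γ : Bool, (∑ x : X, Real.sqrt (P x y γ)) ^ 2 := by
          rw [Fintype.sum_bool]; ring
  have hTpos : (0:ℝ) < T := lt_of_lt_of_le one_pos hT1
  have hSpos : (0:ℝ) < S := lt_of_lt_of_le one_pos hS1
  calc Real.logb 2 S ≤ Real.logb 2 (2 * T) :=
        Real.logb_le_logb_of_le (by norm_num) hSpos hST
    _ = Real.logb 2 T + 1 := by
        rw [Real.logb_mul (by norm_num) (ne_of_gt hTpos)]
        rw [Real.logb_self_eq_one (by norm_num)]
        ring
end
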